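/- arXiv:2605.05386 — 2 statements merged into one kernel-verified Lean document; each statement's English description precedes it below -/
import Mathlib

section
/- Let θ be a random variable with values in a finite set Θ, and let {Y_i}_{i∈S} be a family of random variables that are conditionally independent given θ. Then for any two finite index subsets H ⊆ H' ⊆ S and any index i ∉ H', the mutual information I(θ; Y_i | {Y_j}_{j∈H'}) ≤ I(θ; Y_i | {Y_j}_{j∈H}). In other words, conditioning on a larger history of conditionally independent observations can only decrease the mutual information with any remaining observation. -/
/-! Given θ, the observation `Y i` is independent of any history `Y_T` with `i ∉ T`, so
`H(Y i | θ, Y_T) = H(Y i | θ)` and hence `I(θ; Y i | Y_T) = H(Y i | Y_T) - H(Y i | θ)`.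
The claim thus reduces to "conditioning reduces entropy": `Y_{H'}` determines `Y_H`, and
`H(Z | W) ≤ H(Z | g W)` is an instance of Gibbs' inequality. -/

noncomputable section

variable {Ω : Type*} [Fintype Ω]

/-- Distribution of a finite-valued random variable `X` under mass function `μ`. -/
def dist {A : Type*} [Fintype A] [DecidableEq A] (μ : Ω → ℝ) (X : Ω → A) : A → ℝ :=
  fun a => ∑ ω, if X ω = a then μ ω else 0

/-- Shannon entropy (natural log) of a finite-valued random variable. -/
def entropy {A : Type*} [Fintype A] [DecidableEq A] (μ : Ω → ℝ) (X : Ω → A) : ℝ :=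
  -∑ a, dist μ X a * Real.log (dist μ X a)

/-- Conditional entropy H(Z | W) = H(Z, W) - H(W). -/
def condEntropy {A B : Type*} [Fintype A] [DecidableEq A] [Fintype B] [DecidableEq B]
    (μ : Ω → ℝ) (Z : Ω → A) (W : Ω → B) : ℝ :=
  entropy μ (fun ω => (Z ω, W ω)) - entropy μ W

/-- Conditional mutual information I(X; Z | W) = H(Z | W) - H(Z | X, W). -/
def condMI {A B C : Type*} [Fintype A] [DecidableEq A] [Fintype B] [DecidableEq B]
    [Fintype C] [DecidableEq C] (μ : Ω → ℝ) (X : Ω → A) (Z : Ω → B) (W : Ω → C) : ℝ :=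
  condEntropy μ Z W - condEntropy μ Z (fun ω => (X ω, W ω))

/-- The family `{Y i}_{i ∈ S}` is conditionally independent given `θ`:
for every finite subset `T ⊆ S` the joint conditional distribution given `θ` factorizes
(stated multiplied out to avoid division). -/
def CondIndepFamilyOn {ι Θ B : Type*} [DecidableEq ι] [Fintype Θ] [DecidableEq Θ] [Fintype B] [DecidableEq B]
    (μ : Ω → ℝ) (θ : Ω → Θ) (Y : ι → Ω → B) (S : Set ι) : Prop :=
  ∀ (T : Finset ι), ↑T ⊆ S → ∀ (t : Θ) (y : ι → B),
    dist μ θ t ^ T.card *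
      dist μ (fun ω => (θ ω, fun j : {x // x ∈ T} => Y j.1 ω))
        (t, fun j : {x // x ∈ T} => y j.1)
    = dist μ θ t * ∏ j ∈ T, dist μ (fun ω => (θ ω, Y j ω)) (t, y j)

open Finset Real

theorem sum_mul_log_le_sum_mul_log {A : Type*} (s : Finset A) {p q : A → ℝ}
    (hp : ∀ a ∈ s, 0 ≤ p a) (hq : ∀ a ∈ s, 0 ≤ q a)
    (hpq : ∀ a ∈ s, p a ≠ 0 → q a ≠ 0) (hsum : ∑ a ∈ s, q a ≤ ∑ a ∈ s, p a) :
    ∑ a ∈ s, p a * log (q a) ≤ ∑ a ∈ s, p a * log (p a) := by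
  have pointwise : ∀ a ∈ s, p a * log (q a) ≤ p a * log (p a) + (q a - p a) := by
    intro a ha
    rcases (hp a ha).eq_or_lt with hpa | hpa
    · simp [← hpa, hq a ha]
    · have hqa : 0 < q a := (hq a ha).lt_of_ne' (hpq a ha hpa.ne')
      have hlog : log (q a / p a) ≤ q a / p a - 1 := log_le_sub_one_of_pos (div_pos hqa hpa)
      rw [log_div hqa.ne' hpa.ne'] at hlog
      have := mul_le_mul_of_nonneg_left hlog hpa.le
      rw [mul_sub, mul_sub, mul_div_cancel₀ _ hpa.ne', mul_one] at this
      linarith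
  calc ∑ a ∈ s, p a * log (q a)
      ≤ ∑ a ∈ s, (p a * log (p a) + (q a - p a)) := sum_le_sum pointwise
    _ = ∑ a ∈ s, p a * log (p a) + (∑ a ∈ s, q a - ∑ a ∈ s, p a) := by
      rw [sum_add_distrib, sum_sub_distrib]
    _ ≤ ∑ a ∈ s, p a * log (p a) := by linarith

theorem mul_log_mul_div {p a b c : ℝ} (h : p ≠ 0 → a ≠ 0 ∧ b ≠ 0 ∧ c ≠ 0) :
    p * log (a * b / c) = p * (log a + log b - log c) := by
  by_cases hp : p = 0
  · simp [hp]
  · obtain ⟨ha, hb, hc⟩ := h hp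
    rw [log_div (mul_ne_zero ha hb) hc, log_mul ha hb]

section Distribution

variable {A B : Type*} [Fintype A] [DecidableEq A] [Fintype B] [DecidableEq B] {μ : Ω → ℝ}

theorem dist_apply_nonneg (hμ : ∀ ω, 0 ≤ μ ω) (X : Ω → A) (a : A) : 0 ≤ dist μ X a :=
  sum_nonneg fun ω _ => by split_ifs <;> simp [hμ ω]

theorem sum_dist_prod_fst (Z : Ω → A) (V : Ω → B) (v : B) :
    ∑ z, dist μ (fun ω => (Z ω, V ω)) (z, v) = dist μ V v := by
  unfold _root_.dist
  rw [sum_comm]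
  refine sum_congr rfl fun ω _ => ?_
  simp only [Prod.mk.injEq, ite_and]
  rw [sum_ite_eq]
  simp

theorem dist_prod_swap (μ : Ω → ℝ) (X : Ω → A) (V : Ω → B) (a : A) (b : B) :
    dist μ (fun ω => (X ω, V ω)) (a, b) = dist μ (fun ω => (V ω, X ω)) (b, a) := by
  simp only [_root_.dist, Prod.mk.injEq, and_comm]

variable {X : Ω → A} {V : Ω → B} {g : A → B}

theorem dist_le_dist_of_comp (hμ : ∀ ω, 0 ≤ μ ω) (hV : ∀ ω, V ω = g (X ω)) (a : A) :
    dist μ X a ≤ dist μ V (g a) :=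
  sum_le_sum fun ω _ => by
    by_cases h : X ω = a
    · simp [h, hV]
    · simp only [if_neg h]
      split_ifs <;> simp [hμ ω]

theorem dist_ne_zero_of_comp (hμ : ∀ ω, 0 ≤ μ ω) (hV : ∀ ω, V ω = g (X ω)) {a : A}
    (ha : dist μ X a ≠ 0) : dist μ V (g a) ≠ 0 := fun h0 =>
  ha <| le_antisymm (h0 ▸ dist_le_dist_of_comp hμ hV a) (dist_apply_nonneg hμ X a)

theorem sum_dist_mul_of_comp (hV : ∀ ω, V ω = g (X ω)) (f : B → ℝ) :
    ∑ b, dist μ V b * f b = ∑ a, dist μ X a * f (g a) := by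
  simp only [_root_.dist, sum_mul, ite_mul, zero_mul, hV]
  rw [sum_comm, sum_comm (γ := A)]
  refine sum_congr rfl fun ω _ => ?_
  rw [sum_ite_eq, sum_ite_eq]
  simp

theorem entropy_eq_of_comp (hV : ∀ ω, V ω = g (X ω)) :
    entropy μ V = -∑ a, dist μ X a * log (dist μ V (g a)) := by
  rw [entropy, sum_dist_mul_of_comp hV]

end Distribution

section ConditionalEntropy

variable {A B C : Type*} [Fintype A] [DecidableEq A] [Fintype B] [DecidableEq B]
  [Fintype C] [DecidableEq C] {μ : Ω → ℝ}

theorem condEntropy_le_condEntropy_comp (hμ : ∀ ω, 0 ≤ μ ω) (Z : Ω → A) (W : Ω → B)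
    (g : B → C) : condEntropy μ Z W ≤ condEntropy μ Z (fun ω => g (W ω)) := by
  set p := dist μ (fun ω => (Z ω, W ω))
  set pW := dist μ W
  set pV := dist μ (fun ω => g (W ω))
  set pZV := dist μ (fun ω => (Z ω, g (W ω)))
  have hW : entropy μ W = -∑ x, p x * log (pW x.2) :=
    entropy_eq_of_comp (X := fun ω => (Z ω, W ω)) (g := Prod.snd) fun _ => rfl
  have hV : entropy μ (fun ω => g (W ω)) = -∑ x, p x * log (pV (g x.2)) :=
    entropy_eq_of_comp (X := fun ω => (Z ω, W ω)) (g := fun x => g x.2) fun _ => rfl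
  have hZV : entropy μ (fun ω => (Z ω, g (W ω))) = -∑ x, p x * log (pZV (x.1, g x.2)) :=
    entropy_eq_of_comp (X := fun ω => (Z ω, W ω)) (g := fun x => (x.1, g x.2)) fun _ => rfl
  -- Gibbs' inequality against `q`, the law of `(Z, W)` when `Z` only sees `W` through `g W`.
  set q : A × B → ℝ := fun x => pZV (x.1, g x.2) * pW x.2 / pV (g x.2)
  have support :
      ∀ x, p x ≠ 0 → pZV (x.1, g x.2) ≠ 0 ∧ pW x.2 ≠ 0 ∧ pV (g x.2) ≠ 0 :=
    fun x hx =>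
      have hxW : pW x.2 ≠ 0 := dist_ne_zero_of_comp hμ (g := Prod.snd) (fun _ => rfl) hx
      ⟨dist_ne_zero_of_comp hμ (g := fun x => (x.1, g x.2)) (fun _ => rfl) hx, hxW,
        dist_ne_zero_of_comp hμ (X := W) (fun _ => rfl) hxW⟩
  have mass : ∑ x, q x ≤ ∑ x, p x := by
    rw [Fintype.sum_prod_type, Fintype.sum_prod_type, sum_comm, sum_comm (γ := A)]
    refine sum_le_sum fun b _ => ?_
    have marginalW : ∑ a, p (a, b) = pW b := sum_dist_prod_fst Z W b
    have marginalV : ∑ a, pZV (a, g b) = pV (g b) := sum_dist_prod_fst Z _ (g b)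
    calc ∑ a, q (a, b) = (∑ a, pZV (a, g b)) * pW b / pV (g b) := by rw [sum_mul, sum_div]
      _ = pV (g b) * pW b / pV (g b) := by rw [marginalV]
      _ ≤ ∑ a, p (a, b) := by
          rw [marginalW]
          rcases eq_or_ne (pV (g b)) 0 with h | h
          · simpa [h] using dist_apply_nonneg hμ W b
          · rw [mul_div_cancel_left₀ _ h]
  have q_nonneg : ∀ x ∈ univ, 0 ≤ q x := fun x _ =>
    div_nonneg (mul_nonneg (dist_apply_nonneg hμ _ _) (dist_apply_nonneg hμ _ _))
      (dist_apply_nonneg hμ _ _)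
  have q_ne_zero : ∀ x ∈ univ, p x ≠ 0 → q x ≠ 0 := fun x _ hx =>
    have ⟨hZV, hW, hV⟩ := support x hx
    div_ne_zero (mul_ne_zero hZV hW) hV
  have gibbs := sum_mul_log_le_sum_mul_log univ (fun x _ => dist_apply_nonneg hμ _ x)
    q_nonneg q_ne_zero mass
  have split : ∑ x, p x * log (q x) =
      ∑ x, p x * log (pZV (x.1, g x.2)) + ∑ x, p x * log (pW x.2) -
        ∑ x, p x * log (pV (g x.2)) := by
    rw [← sum_add_distrib, ← sum_sub_distrib]
    refine sum_congr rfl fun x _ => ?_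
    rw [mul_log_mul_div (support x)]
    ring
  rw [condEntropy, condEntropy, hW, hV, hZV, entropy]
  linarith

theorem condEntropy_prod_eq_of_dist_mul_eq (hμ : ∀ ω, 0 ≤ μ ω) (W : Ω → A) (U : Ω → B)
    (V : Ω → C)
    (hfact : ∀ w u v, dist μ (fun ω => (W ω, (U ω, V ω))) (w, (u, v)) * dist μ U u =
      dist μ (fun ω => (U ω, V ω)) (u, v) * dist μ (fun ω => (W ω, U ω)) (w, u)) :
    condEntropy μ W (fun ω => (U ω, V ω)) = condEntropy μ W U := by
  set p := dist μ (fun ω => (W ω, (U ω, V ω)))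
  set pUV := dist μ (fun ω => (U ω, V ω))
  set pWU := dist μ (fun ω => (W ω, U ω))
  set pU := dist μ U
  have hUV : entropy μ (fun ω => (U ω, V ω)) = -∑ x, p x * log (pUV x.2) :=
    entropy_eq_of_comp (X := fun ω => (W ω, (U ω, V ω))) (g := Prod.snd) fun _ => rfl
  have hWU : entropy μ (fun ω => (W ω, U ω)) = -∑ x, p x * log (pWU (x.1, x.2.1)) :=
    entropy_eq_of_comp (X := fun ω => (W ω, (U ω, V ω))) (g := fun x => (x.1, x.2.1))
      fun _ => rfl
  have hU : entropy μ U = -∑ x, p x * log (pU x.2.1) :=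
    entropy_eq_of_comp (X := fun ω => (W ω, (U ω, V ω))) (g := fun x => x.2.1) fun _ => rfl
  have support : ∀ x, p x ≠ 0 → pUV x.2 ≠ 0 ∧ pWU (x.1, x.2.1) ≠ 0 ∧ pU x.2.1 ≠ 0 :=
    fun x hx =>
      have hxU : pUV x.2 ≠ 0 := dist_ne_zero_of_comp hμ (g := Prod.snd) (fun _ => rfl) hx
      ⟨hxU, dist_ne_zero_of_comp hμ (g := fun x => (x.1, x.2.1)) (fun _ => rfl) hx,
        dist_ne_zero_of_comp hμ (X := fun ω => (U ω, V ω)) (g := Prod.fst) (fun _ => rfl) hxU⟩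
  have split : ∑ x, p x * log (p x) =
      ∑ x, p x * log (pUV x.2) + ∑ x, p x * log (pWU (x.1, x.2.1)) -
        ∑ x, p x * log (pU x.2.1) := by
    rw [← sum_add_distrib, ← sum_sub_distrib]
    refine sum_congr rfl fun x _ => ?_
    by_cases hx : p x = 0
    · simp [hx]
    · have hp : p x = pUV x.2 * pWU (x.1, x.2.1) / pU x.2.1 :=
        eq_div_of_mul_eq (support x hx).2.2 (hfact x.1 x.2.1 x.2.2)
      rw [hp, mul_log_mul_div fun _ => support x hx]
      ring
  rw [condEntropy, condEntropy, hUV, hWU, hU, entropy]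
  linarith

end ConditionalEntropy

section History

variable {ι Θ B : Type*} [DecidableEq ι] [Fintype Θ] [DecidableEq Θ] [Fintype B]
  [DecidableEq B] {μ : Ω → ℝ} {θ : Ω → Θ} {Y : ι → Ω → B}

theorem dist_history_insert (i : ι) (T : Finset ι) (t : Θ) (y : ι → B) :
    dist μ (fun ω => (θ ω, fun j : {x // x ∈ insert i T} => Y j.1 ω))
        (t, fun j : {x // x ∈ insert i T} => y j.1) =
      dist μ (fun ω => (Y i ω, (θ ω, fun j : {x // x ∈ T} => Y j.1 ω)))
        (y i, (t, fun j : {x // x ∈ T} => y j.1)) := by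
  refine sum_congr rfl fun ω _ => if_congr ?_ rfl rfl
  simp only [Prod.mk.injEq, funext_iff, Subtype.forall, mem_insert, forall_eq_or_imp]
  tauto

theorem CondIndepFamilyOn.dist_mul_eq {S : Set ι} (hμ : ∀ ω, 0 ≤ μ ω)
    (hCI : CondIndepFamilyOn μ θ Y S) {T : Finset ι} (hTS : ↑T ⊆ S) {i : ι} (hi : i ∉ T)
    (hiS : i ∈ S) (w : B) (t : Θ) (v : {x // x ∈ T} → B) :
    dist μ (fun ω => (Y i ω, (θ ω, fun j : {x // x ∈ T} => Y j.1 ω))) (w, (t, v)) *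
        dist μ θ t =
      dist μ (fun ω => (θ ω, fun j : {x // x ∈ T} => Y j.1 ω)) (t, v) *
        dist μ (fun ω => (Y i ω, θ ω)) (w, t) := by
  set y : ι → B := fun j => if hj : j ∈ T then v ⟨j, hj⟩ else w
  have hyi : y i = w := dif_neg hi
  have hyT : (fun j : {x // x ∈ T} => y j.1) = v := funext fun j => dif_pos j.2
  have hInsert := hCI (insert i T) (by simpa using Set.insert_subset hiS hTS) t y
  have hT := hCI T hTS t y
  rw [card_insert_of_notMem hi, prod_insert hi, dist_history_insert, hyi, hyT] at hInsert
  rw [hyT] at hT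
  rw [dist_prod_swap μ (Y i) θ w t]
  set c := dist μ θ t
  rcases eq_or_ne c 0 with hc | hc
  · have hTzero : dist μ (fun ω => (θ ω, fun j : {x // x ∈ T} => Y j.1 ω)) (t, v) = 0 :=
      le_antisymm (hc ▸ dist_le_dist_of_comp hμ (g := Prod.fst) (fun _ => rfl) (t, v))
        (dist_apply_nonneg hμ _ _)
    rw [hc, hTzero, mul_zero, zero_mul]
  · refine mul_left_cancel₀ (pow_ne_zero (T.card + 1) hc) ?_
    linear_combination c * hInsert - c * dist μ (fun ω => (θ ω, Y i ω)) (t, w) * hT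

theorem CondIndepFamilyOn.condEntropy_history_eq {S : Set ι} (hμ : ∀ ω, 0 ≤ μ ω)
    (hCI : CondIndepFamilyOn μ θ Y S) {T : Finset ι} (hTS : ↑T ⊆ S) {i : ι} (hi : i ∉ T)
    (hiS : i ∈ S) :
    condEntropy μ (Y i) (fun ω => (θ ω, fun j : {x // x ∈ T} => Y j.1 ω)) =
      condEntropy μ (Y i) θ :=
  condEntropy_prod_eq_of_dist_mul_eq hμ _ _ _ (hCI.dist_mul_eq hμ hTS hi hiS)

end History

theorem mi_antitone_in_history_general {ι Θ B : Type*} [DecidableEq ι] [Fintype Θ] [DecidableEq Θ]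
    [Fintype B] [DecidableEq B]
    (μ : Ω → ℝ) (hμ0 : ∀ ω, 0 ≤ μ ω)
    (θ : Ω → Θ) (Y : ι → Ω → B) (S : Set ι)
    (hCI : CondIndepFamilyOn μ θ Y S)
    (H H' : Finset ι) (hHH' : H ⊆ H') (hH'S : ↑H' ⊆ S)
    (i : ι) (hi : i ∉ H') (hiS : i ∈ S) :
    condMI μ θ (Y i) (fun ω => fun j : {x // x ∈ H'} => Y j.1 ω) ≤
      condMI μ θ (Y i) (fun ω => fun j : {x // x ∈ H} => Y j.1 ω) := by
  have forget : condEntropy μ (Y i) (fun ω => fun j : {x // x ∈ H'} => Y j.1 ω) ≤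
      condEntropy μ (Y i) (fun ω => fun j : {x // x ∈ H} => Y j.1 ω) :=
    condEntropy_le_condEntropy_comp hμ0 (Y i) (fun ω => fun j : {x // x ∈ H'} => Y j.1 ω)
      fun f (j : {x // x ∈ H}) => f ⟨j.1, hHH' j.2⟩
  rw [condMI, condMI, hCI.condEntropy_history_eq hμ0 hH'S hi hiS,
    hCI.condEntropy_history_eq hμ0 ((coe_subset.2 hHH').trans hH'S)
      (fun h => hi (hHH' h)) hiS]
  linarith

/-- Conditioning on a larger history of conditionally independent observations can only
decrease the mutual information with any remaining observation. -/
theorem mi_antitone_in_history {ι Θ B : Type*} [DecidableEq ι] [Fintype Θ] [DecidableEq Θ]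
    [Fintype B] [DecidableEq B]
    (μ : Ω → ℝ) (hμ0 : ∀ ω, 0 ≤ μ ω) (hμ1 : ∑ ω, μ ω = 1)
    (θ : Ω → Θ) (Y : ι → Ω → B) (S : Set ι)
    (hCI : CondIndepFamilyOn μ θ Y S)
    (H H' : Finset ι) (hHH' : H ⊆ H') (hH'S : ↑H' ⊆ S)
    (i : ι) (hi : i ∉ H') (hiS : i ∈ S) :
    condMI μ θ (Y i) (fun ω => fun j : {x // x ∈ H'} => Y j.1 ω) ≤
      condMI μ θ (Y i) (fun ω => fun j : {x // x ∈ H} => Y j.1 ω) :=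
  mi_antitone_in_history_general μ hμ0 θ Y S hCI H H' hHH' hH'S i hi hiS
end
end

section
/- Let (G_t)_{t≥0} be a real sequence with G_0 = 0 and let G* ≥ 0. Fix a positive integer k. If for every t with 0 ≤ t < k the recurrence G* − G_t ≤ k·(G_{t+1} − G_t) holds, then G_k ≥ (1 − 1/e)·G*. -/
/-- If `G 0 = 0`, `G* ≥ 0`, and for every `t < k` the recurrence
`G* − G t ≤ k·(G (t+1) − G t)` holds, then `G k ≥ (1 − 1/e)·G*`. -/
theorem greedy_one_minus_inv_e (G : ℕ → ℝ) (hG0 : G 0 = 0)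
    (Gstar : ℝ) (hGstar : 0 ≤ Gstar) (k : ℕ) (hk : 0 < k)
    (hrec : ∀ t, t < k → Gstar - G t ≤ (k : ℝ) * (G (t + 1) - G t)) :
    (1 - 1 / Real.exp 1) * Gstar ≤ G k := by
  have hk' : (1 : ℝ) ≤ (k : ℝ) := by exact_mod_cast hk
  have hkpos : (0 : ℝ) < k := by linarith
  have hr0 : (0 : ℝ) ≤ 1 - 1 / k := by
    rw [sub_nonneg, div_le_one hkpos]; exact hk'
  -- induction bound
  have key : ∀ t, t ≤ k → Gstar - G t ≤ (1 - 1 / k) ^ t * Gstar := by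
    intro t
    induction t with
    | zero => intro _; simp [hG0]
    | succ n ih =>
      intro hn
      have hnk : n < k := hn
      have h1 := ih (le_of_lt hnk)
      have h2 := hrec n hnk
      have h3 : Gstar - G (n + 1) ≤ (1 - 1 / k) * (Gstar - G n) := by
        have : (k : ℝ) * (Gstar - G (n+1)) ≤ ((k : ℝ) - 1) * (Gstar - G n) := by
          nlinarith
        rw [show (1 - 1/(k:ℝ)) = ((k:ℝ)-1)/k by field_simp, div_mul_eq_mul_div,
          le_div_iff₀ hkpos]
        nlinarith
      calc Gstar - G (n+1) ≤ (1 - 1/k) * (Gstar - G n) := h3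
        _ ≤ (1 - 1/k) * ((1 - 1/k) ^ n * Gstar) := by
            exact mul_le_mul_of_nonneg_left h1 hr0
        _ = (1 - 1/k) ^ (n+1) * Gstar := by ring
  have hGk := key k le_rfl
  -- (1 - 1/k)^k ≤ 1/e
  have hexp : (1 - 1 / (k:ℝ)) ^ k ≤ 1 / Real.exp 1 := by
    have h1 : (1 : ℝ) - 1 / k ≤ Real.exp (-(1 / k)) := by
      have := Real.add_one_le_exp (-(1 / (k:ℝ)))
      linarith
    have h2 : (1 - 1 / (k:ℝ)) ^ k ≤ Real.exp (-(1 / k)) ^ k :=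
      pow_le_pow_left₀ hr0 h1 k
    have h3 : Real.exp (-(1 / (k:ℝ))) ^ k = Real.exp (-1) := by
      rw [← Real.exp_nat_mul]
      congr 1
      field_simp
    rw [h3] at h2
    rw [Real.exp_neg, ← one_div] at h2
    exact h2
  have : (1 - 1 / (k:ℝ)) ^ k * Gstar ≤ (1 / Real.exp 1) * Gstar :=
    mul_le_mul_of_nonneg_right hexp hGstar
  nlinarith
end
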